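/- Let 𝔰₀ ⊆ V(ℂ²) be the type (II)₀ realization of sl(2,ℂ), spanned by X = exp(x)∂_y, Y = exp(−x)(y∂_x + (y²/2)∂_y), H = [X,Y] = ∂_x, let 2d be a nonnegative integer and V = exp(dx)(∂_x + y∂_y). Then the 𝔰₀-invariant subspace of V(ℂ²) generated by V is the span of (ad Y)ⁿ(V) for 0 ≤ n ≤ 2d, and it is an abelian Lie subalgebra of V(ℂ²). -/

import Mathlib

open Complex Module Set

set_option synthInstance.maxHeartbeats 1000000
set_option maxHeartbeats 1000000

noncomputable section

/-- The algebra of entire (holomorphic) functions on `ℂ²`. -/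
def Entire : Subalgebra ℂ (ℂ × ℂ → ℂ) where
  carrier := {f | AnalyticOnNhd ℂ f Set.univ}
  mul_mem' hf hg := hf.mul hg
  add_mem' hf hg := hf.add hg
  one_mem' := analyticOnNhd_const
  zero_mem' := analyticOnNhd_const
  algebraMap_mem' _ := analyticOnNhd_const

/-- The Lie algebra `V(ℂ²)` of holomorphic vector fields on `ℂ²`, i.e. derivations
`F(x,y)∂ₓ + G(x,y)∂_y` of the ℂ-algebra of entire functions on `ℂ²`, with bracket the
commutator of derivations. -/
abbrev VF := Derivation ℂ Entire Entire

instance (M : Submodule ℂ VF) : AddCommGroup ↥M := @Submodule.addCommGroup ℂ VF _ _ _ M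

/- Shortcut instances, to speed up elaboration. -/
@[reducible] instance (priority := 10000) : AddCommMonoid Entire := inferInstance
instance (priority := 10000) : SMulCommClass ℂ Entire Entire := inferInstance
@[reducible] instance (priority := 10000) : SMul Entire VF := inferInstance
@[reducible] instance (priority := 10000) : SMul ℂ VF := inferInstance
@[reducible] instance (priority := 10000) : LieRing VF := inferInstance
@[reducible] instance (priority := 10000) : AddCommGroup VF := inferInstance

theorem Entire.diffAt (f : Entire) (p : ℂ × ℂ) : DifferentiableAt ℂ (f : ℂ × ℂ → ℂ) p :=
  (f.2 p trivial).differentiableAt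

theorem Entire.fderiv_mem {f : ℂ × ℂ → ℂ} (hf : f ∈ Entire) (v : ℂ × ℂ) :
    (fun p => fderiv ℂ f p v) ∈ Entire := fun p _ =>
  ((ContinuousLinearMap.apply ℂ ℂ v).analyticAt _).comp ((hf.fderiv) p trivial)

/-- The constant-coefficient vector field in the direction `v`. -/
def Dvec (v : ℂ × ℂ) : VF where
  toFun f := ⟨fun p => fderiv ℂ (f : ℂ × ℂ → ℂ) p v, Entire.fderiv_mem f.2 v⟩
  map_add' f g := Subtype.ext <| funext fun p => by
    show fderiv ℂ ((f : ℂ × ℂ → ℂ) + (g : ℂ × ℂ → ℂ)) p v = _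
    rw [fderiv_add (Entire.diffAt f p) (Entire.diffAt g p)]
    rfl
  map_smul' c f := Subtype.ext <| funext fun p => by
    show fderiv ℂ (c • (f : ℂ × ℂ → ℂ)) p v = _
    rw [fderiv_const_smul (Entire.diffAt f p) c]
    rfl
  map_one_eq_zero' := Subtype.ext <| funext fun p => by
    show fderiv ℂ (fun _ => (1 : ℂ)) p v = 0
    rw [fderiv_const_apply]
    rfl
  leibniz' f g := Subtype.ext <| funext fun p => by
    show fderiv ℂ (fun q => (f : ℂ × ℂ → ℂ) q * (g : ℂ × ℂ → ℂ) q) p v = _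
    rw [fderiv_fun_mul (Entire.diffAt f p) (Entire.diffAt g p)]
    show (f : ℂ × ℂ → ℂ) p • fderiv ℂ (g : ℂ × ℂ → ℂ) p v
      + (g : ℂ × ℂ → ℂ) p • fderiv ℂ (f : ℂ × ℂ → ℂ) p v = _
    rfl

/-- The coordinate vector field `∂ₓ`. -/
def Dx : VF := Dvec (1, 0)

/-- The coordinate vector field `∂_y`. -/
def Dy : VF := Dvec (0, 1)

/-- The entire function `exp (c·x)`. -/
def ex (c : ℂ) : Entire :=
  ⟨fun p => Complex.exp (c * p.1), fun p _ =>
    analyticAt_cexp.comp ((analyticAt_const (v := c)).mul (analyticAt_fst (p := p)))⟩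

/-- The entire function `y` (the second coordinate). -/
def yc : Entire := ⟨fun p => p.2, fun _ _ => analyticAt_snd⟩

/-- The entire function `f(y)` built from an entire function `f` of one variable. -/
def ofY (f : ℂ → ℂ) (hf : AnalyticOnNhd ℂ f Set.univ) : Entire :=
  ⟨fun p => f p.2, fun p _ => (hf p.2 trivial).comp analyticAt_snd⟩

/-- The smallest `s`-invariant subspace of `V(ℂ²)` containing `v`. -/
def invSpan (s : LieSubalgebra ℂ VF) (v : VF) : Submodule ℂ VF :=
  sInf {W : Submodule ℂ VF | v ∈ W ∧ ∀ S ∈ s, ∀ w ∈ W, ⁅S, w⁆ ∈ W}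

/-- `X = exp(x)∂_y`, the first generator of the type (II) realization of `sl(2,ℂ)`. -/
def Xb : VF := ex 1 • Dy

/-- `Y = exp(−x)(y∂ₓ + (y²/2 + ε)∂_y)`, the second generator of the type (II)_ε realization
of `sl(2,ℂ)`. -/
def Yb (ε : ℂ) : VF :=
  (ex (-1) * yc) • Dx + (ex (-1) * (((1 : ℂ) / 2) • yc ^ 2 + algebraMap ℂ Entire ε)) • Dy

/-- The type (II)_ε realization of `sl(2,ℂ)` in `V(ℂ²)`: the span of `X = exp(x)∂_y`,
`Y = exp(−x)(y∂ₓ + (y²/2 + ε)∂_y)` and `H = [X,Y]`. -/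
def typeII (ε : ℂ) : LieSubalgebra ℂ VF := LieSubalgebra.lieSpan ℂ VF {Xb, Yb ε, ⁅Xb, Yb ε⁆}

/-- `H = [X,Y]` for the type (II)_ε realization. -/
def Hb (ε : ℂ) : VF := ⁅Xb, Yb ε⁆

/-- The vector field `W = ∂ₓ + y∂_y`. -/
def Wvf : VF := Dx + yc • Dy

/-- The vector field `exp(dx)(∂ₓ + y∂_y)`. -/
def Vvf (d : ℂ) : VF := ex d • (Dx + yc • Dy)

/-- The vector field `exp(dx)∂_y`. -/
def Evf (d : ℂ) : VF := ex d • Dy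

/-- The vector field `exp(dx)(∂ₓ + (y + ℓ)∂_y)`. -/
def Vlvf (d l : ℂ) : VF := ex d • (Dx + (yc + algebraMap ℂ Entire l) • Dy)

/-! The Euler field `W = ∂ₓ + y∂_y` commutes with `X` and `Y`, so both act on fields `f W` through
their coefficient: `[Z, f W] = Z(f) W`. On the monomials `exp(a x) yᵏ`,
`Y(exp(a x) yᵏ) = (a + k/2) exp((a-1) x) yᵏ⁺¹` and `X(exp(a x) yᵏ⁺¹) = (k+1) exp((a+1) x) yᵏ`, so
`(ad Y)ᵏ V` is a multiple of `exp((d-k) x) yᵏ W` which vanishes for `k = 2d+1`, and the span of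
these fields is stable under `X` and `Y`, hence under the Lie algebra they generate. Their
coefficients are all eigenfunctions of `W` for the eigenvalue `d`, and
`[f W, g W] = (f W(g) - g W(f)) W` vanishes for two such eigenfunctions. -/

section

variable {R L : Type*} [CommRing R] [LieRing L] [LieAlgebra R L]

def Submodule.lieStabilizer (W : Submodule R L) : LieSubalgebra R L where
  carrier := {x | ∀ w ∈ W, ⁅x, w⁆ ∈ W}
  add_mem' ha hb w hw := by rw [add_lie]; exact W.add_mem (ha w hw) (hb w hw)
  zero_mem' w _ := by rw [zero_lie]; exact W.zero_mem
  smul_mem' c _ ha w hw := by rw [smul_lie]; exact W.smul_mem c (ha w hw)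
  lie_mem' ha hb w hw := by rw [lie_lie]; exact W.sub_mem (ha _ (hb w hw)) (hb _ (ha w hw))

theorem Submodule.mem_lieStabilizer_span {G : Set L} {x : L}
    (h : ∀ g ∈ G, ⁅x, g⁆ ∈ span R G) : x ∈ (span R G).lieStabilizer := fun _ hw =>
  (span_le (p := (span R G).comap (LieAlgebra.ad R L x))).2 h hw

theorem lie_eq_zero_of_mem_span {G : Set L} (hG : ∀ g ∈ G, ∀ h ∈ G, ⁅g, h⁆ = 0) {a b : L}
    (ha : a ∈ Submodule.span R G) (hb : b ∈ Submodule.span R G) : ⁅a, b⁆ = 0 := by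
  have hbG : ∀ g ∈ G, ⁅b, g⁆ = 0 := fun g hg => by
    have : ⁅g, b⁆ = 0 :=
      (Submodule.span_le (p := LinearMap.ker (LieAlgebra.ad R L g))).2 (hG g hg) hb
    rw [← lie_skew, this, neg_zero]
  have : ⁅b, a⁆ = 0 := (Submodule.span_le (p := LinearMap.ker (LieAlgebra.ad R L b))).2 hbG ha
  rw [← lie_skew, this, neg_zero]

end

theorem invSpan_le {s : LieSubalgebra ℂ VF} {v : VF} {W : Submodule ℂ VF} (hv : v ∈ W)
    (hs : s ≤ W.lieStabilizer) : invSpan s v ≤ W :=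
  sInf_le ⟨hv, fun _ hS => hs hS⟩

theorem pow_ad_apply_mem_invSpan {s : LieSubalgebra ℂ VF} {y : VF} (hy : y ∈ s) (v : VF)
    (k : ℕ) : (LieAlgebra.ad ℂ VF y ^ k) v ∈ invSpan s v :=
  Submodule.mem_sInf.2 fun _ ⟨hv, hW⟩ => Module.End.pow_apply_mem_of_forall_mem k (hW y hy) v hv

namespace Derivation

variable {R A : Type*} [CommRing R] [CommRing A] [Algebra R A]

theorem lie_smul_right (D E : Derivation R A A) (f : A) :
    ⁅D, f • E⁆ = D f • E + f • ⁅D, E⁆ := by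
  ext g
  simp only [commutator_apply, smul_apply, add_apply, leibniz, smul_eq_mul]
  ring

theorem lie_smul_of_lie_eq_zero {D E : Derivation R A A} (h : ⁅D, E⁆ = 0) (f : A) :
    ⁅D, f • E⁆ = D f • E := by
  rw [lie_smul_right, h, smul_zero, add_zero]

theorem lie_smul_smul_self (D : Derivation R A A) (f g : A) :
    ⁅f • D, g • D⁆ = (f * D g - g * D f) • D := by
  ext h
  simp only [commutator_apply, smul_apply, leibniz, smul_eq_mul]
  ring

theorem lie_smul_smul_self_eq_zero {D : Derivation R A A} {f g : A} {c : R} (hf : D f = c • f)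
    (hg : D g = c • g) : ⁅f • D, g • D⁆ = 0 := by
  rw [lie_smul_smul_self, hf, hg, mul_smul_comm, mul_smul_comm, mul_comm, sub_self, zero_smul]

theorem pow_ad_smul_of_lie_eq_zero {D E : Derivation R A A} (h : ⁅D, E⁆ = 0) (f : A) (k : ℕ) :
    (LieAlgebra.ad R (Derivation R A A) D ^ k) (f • E) = ((⇑D)^[k] f) • E := by
  induction k with
  | zero => rfl
  | succ k ih =>
    rw [pow_succ', Module.End.mul_apply, ih, LieAlgebra.ad_apply, lie_smul_of_lie_eq_zero h,
      Function.iterate_succ_apply']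

end Derivation

theorem Dvec_lie_Dvec (v w : ℂ × ℂ) : ⁅Dvec v, Dvec w⁆ = 0 := by
  ext f p
  have second : ∀ a b : ℂ × ℂ, (Dvec a (Dvec b f) : ℂ × ℂ → ℂ) p
      = fderiv ℂ (fderiv ℂ (f : ℂ × ℂ → ℂ)) p a b := fun a b => by
    show fderiv ℂ (fun q => fderiv ℂ (f : ℂ × ℂ → ℂ) q b) p a = _
    rw [fderiv_clm_apply ((f.2.fderiv p trivial).differentiableAt) (differentiableAt_const b)]
    simp
  have hsymm : IsSymmSndFDerivAt ℂ (f : ℂ × ℂ → ℂ) p :=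
    ((f.2 p trivial).contDiffAt (n := 2)).isSymmSndFDerivAt
      (by simp [minSmoothness_of_isRCLikeNormedField])
  show (Dvec v (Dvec w f) : ℂ × ℂ → ℂ) p - (Dvec w (Dvec v f) : ℂ × ℂ → ℂ) p = 0
  rw [second, second, hsymm v w, sub_self]

theorem Dvec_ex (v : ℂ × ℂ) (c : ℂ) : Dvec v (ex c) = (c * v.1) • ex c := by
  ext p
  have hlin : HasFDerivAt (fun q : ℂ × ℂ => c * q.1) (c • ContinuousLinearMap.fst ℂ ℂ ℂ) p :=
    (hasFDerivAt_fst (p := p)).const_smul c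
  show fderiv ℂ (fun q : ℂ × ℂ => Complex.exp (c * q.1)) p v = c * v.1 * Complex.exp (c * p.1)
  rw [(hlin.cexp).fderiv]
  simp only [smul_apply, ContinuousLinearMap.coe_fst', smul_eq_mul]
  ring

theorem Dvec_yc (v : ℂ × ℂ) : Dvec v yc = v.2 • 1 := by
  ext p
  show fderiv ℂ (fun q : ℂ × ℂ => q.2) p v = v.2 * 1
  rw [fderiv_snd, mul_one]
  rfl

theorem Dx_ex (c : ℂ) : Dx (ex c) = c • ex c := by
  rw [Dx, Dvec_ex, mul_one]

theorem Dy_ex (c : ℂ) : Dy (ex c) = 0 := by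
  rw [Dy, Dvec_ex, mul_zero, zero_smul]

theorem Dx_yc : Dx yc = 0 := by
  rw [Dx, Dvec_yc, zero_smul]

theorem Dy_yc : Dy yc = 1 := by
  rw [Dy, Dvec_yc, one_smul]

theorem ex_mul_ex (a b : ℂ) : ex a * ex b = ex (a + b) := by
  ext p
  show Complex.exp (a * p.1) * Complex.exp (b * p.1) = Complex.exp ((a + b) * p.1)
  rw [← Complex.exp_add, add_mul]

def expMono (a : ℂ) (k : ℕ) : Entire := ex a * yc ^ k

theorem expMono_mul (a b : ℂ) (j k : ℕ) :
    expMono a j * expMono b k = expMono (a + b) (j + k) := by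
  rw [expMono, expMono, expMono, mul_mul_mul_comm, ex_mul_ex, pow_add]

theorem Dx_expMono (a : ℂ) (k : ℕ) : Dx (expMono a k) = a • expMono a k := by
  simp only [expMono, Derivation.leibniz, Derivation.leibniz_pow, Dx_yc, Dx_ex, smul_eq_mul,
    mul_zero, smul_zero, zero_add]
  rw [mul_smul_comm, mul_comm]

theorem Dy_expMono_succ (a : ℂ) (k : ℕ) :
    Dy (expMono a (k + 1)) = ((k + 1 : ℕ) : ℂ) • expMono a k := by
  simp only [expMono, Derivation.leibniz, Derivation.leibniz_pow, Dy_yc, Dy_ex, smul_eq_mul,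
    mul_zero, add_zero, Nat.add_sub_cancel, mul_one]
  rw [← Nat.cast_smul_eq_nsmul ℂ, mul_smul_comm]

theorem Dy_expMono_zero (a : ℂ) : Dy (expMono a 0) = 0 := by
  rw [expMono, pow_zero, mul_one, Dy_ex]

theorem yc_mul_expMono (a : ℂ) (k : ℕ) : yc * expMono a k = expMono a (k + 1) := by
  rw [expMono, expMono, pow_succ]
  ring

theorem yc_mul_Dy_expMono (a : ℂ) (k : ℕ) : yc * Dy (expMono a k) = (k : ℂ) • expMono a k := by
  cases k with
  | zero => rw [Dy_expMono_zero, mul_zero, Nat.cast_zero, zero_smul]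
  | succ k => rw [Dy_expMono_succ, mul_smul_comm, yc_mul_expMono]

theorem Wvf_apply (f : Entire) : Wvf f = Dx f + yc * Dy f := rfl

theorem Wvf_expMono (a : ℂ) (k : ℕ) : Wvf (expMono a k) = (a + k) • expMono a k := by
  rw [Wvf_apply, Dx_expMono, yc_mul_Dy_expMono, add_smul]

theorem Xb_eq : Xb = expMono 1 0 • Dy := by
  rw [Xb, expMono, pow_zero, mul_one]

theorem Yb_zero_eq : Yb 0 = expMono (-1) 1 • Dx + ((1 / 2 : ℂ) • expMono (-1) 2) • Dy := by
  rw [Yb, map_zero, add_zero, expMono, expMono, pow_one, mul_smul_comm]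

theorem Xb_expMono_succ (a : ℂ) (k : ℕ) :
    Xb (expMono a (k + 1)) = ((k + 1 : ℕ) : ℂ) • expMono (a + 1) k := by
  rw [Xb_eq, Derivation.smul_apply, Dy_expMono_succ, smul_eq_mul, mul_smul_comm, expMono_mul,
    add_comm 1 a, zero_add]

theorem Xb_expMono_zero (a : ℂ) : Xb (expMono a 0) = 0 := by
  rw [Xb_eq, Derivation.smul_apply, Dy_expMono_zero, smul_zero]

theorem Yb_zero_expMono (a : ℂ) (k : ℕ) :
    Yb 0 (expMono a k) = (a + k / 2) • expMono (a - 1) (k + 1) := by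
  have hy : expMono (-1) 2 = expMono (-1) 1 * yc := by
    rw [mul_comm, yc_mul_expMono]
  rw [Yb_zero_eq, Derivation.add_apply, Derivation.smul_apply, Derivation.smul_apply, Dx_expMono,
    hy, smul_eq_mul, smul_eq_mul, mul_smul_comm, smul_mul_assoc, mul_assoc, yc_mul_Dy_expMono,
    mul_smul_comm, smul_smul, ← add_smul, expMono_mul, ← sub_eq_neg_add, add_comm 1 k]
  congr 1
  ring

theorem Wvf_lie_smul_Dx (f : Entire) : ⁅Wvf, f • Dx⁆ = Wvf f • Dx := by
  have hxy : ⁅Dx, Dy⁆ = 0 := Dvec_lie_Dvec _ _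
  rw [Derivation.lie_smul_right, Wvf, add_lie, lie_self, zero_add, ← lie_skew,
    Derivation.lie_smul_right, Dx_yc, hxy, zero_smul, smul_zero, add_zero, neg_zero, smul_zero,
    add_zero]

theorem Wvf_lie_smul_Dy (f : Entire) : ⁅Wvf, f • Dy⁆ = (Wvf f - f) • Dy := by
  have hxy : ⁅Dx, Dy⁆ = 0 := Dvec_lie_Dvec _ _
  rw [Derivation.lie_smul_right, Wvf, add_lie, hxy, zero_add, ← lie_skew,
    Derivation.lie_smul_right, Dy_yc, lie_self, one_smul, smul_zero, add_zero, sub_smul,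
    smul_neg, ← sub_eq_add_neg]

theorem Xb_lie_Wvf : ⁅Xb, Wvf⁆ = 0 := by
  rw [← lie_skew, Xb_eq, Wvf_lie_smul_Dy, Wvf_expMono, Nat.cast_zero, add_zero, one_smul,
    sub_self, zero_smul, neg_zero]

theorem Yb_zero_lie_Wvf : ⁅Yb 0, Wvf⁆ = 0 := by
  rw [← lie_skew, Yb_zero_eq, lie_add, Wvf_lie_smul_Dx, Wvf_lie_smul_Dy, Derivation.map_smul,
    Wvf_expMono, Wvf_expMono]
  norm_num

theorem iterate_Yb_zero_ex (n k : ℕ) :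
    (⇑(Yb 0))^[k] (ex ((n : ℂ) / 2))
      = (∏ j ∈ Finset.range k, ((n : ℂ) - j) / 2) • expMono ((n : ℂ) / 2 - k) k := by
  induction k with
  | zero =>
    rw [Function.iterate_zero_apply, Finset.prod_range_zero, one_smul, Nat.cast_zero, sub_zero,
      expMono, pow_zero, mul_one]
  | succ k ih =>
    rw [Function.iterate_succ_apply', ih, Derivation.map_smul, Yb_zero_expMono, smul_smul,
      Finset.prod_range_succ]
    congr 2 <;> push_cast <;> ring

theorem pow_ad_Yb_zero_Vvf (n k : ℕ) :
    (LieAlgebra.ad ℂ VF (Yb 0) ^ k) (Vvf ((n : ℂ) / 2))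
      = ((∏ j ∈ Finset.range k, ((n : ℂ) - j) / 2) • expMono ((n : ℂ) / 2 - k) k) • Wvf := by
  rw [show Vvf ((n : ℂ) / 2) = ex ((n : ℂ) / 2) • Wvf from rfl,
    Derivation.pow_ad_smul_of_lie_eq_zero Yb_zero_lie_Wvf, iterate_Yb_zero_ex]

theorem pow_ad_Yb_zero_Vvf_eq_zero (n : ℕ) :
    (LieAlgebra.ad ℂ VF (Yb 0) ^ (n + 1)) (Vvf ((n : ℂ) / 2)) = 0 := by
  rw [pow_ad_Yb_zero_Vvf, Finset.prod_eq_zero (Finset.self_mem_range_succ n) (by simp),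
    zero_smul, zero_smul]

theorem Xb_lie_pow_ad_Yb_zero_Vvf (n k : ℕ) :
    ⁅Xb, (LieAlgebra.ad ℂ VF (Yb 0) ^ (k + 1)) (Vvf ((n : ℂ) / 2))⁆
      = (((k : ℂ) + 1) * (((n : ℂ) - k) / 2))
        • (LieAlgebra.ad ℂ VF (Yb 0) ^ k) (Vvf ((n : ℂ) / 2)) := by
  rw [pow_ad_Yb_zero_Vvf, pow_ad_Yb_zero_Vvf, Derivation.lie_smul_of_lie_eq_zero Xb_lie_Wvf,
    Derivation.map_smul, Xb_expMono_succ, smul_smul, ← smul_assoc, smul_smul,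
    Finset.prod_range_succ]
  congr 2
  · push_cast
    ring
  · congr 1
    push_cast
    ring

theorem Xb_lie_Vvf (d : ℂ) : ⁅Xb, Vvf d⁆ = 0 := by
  rw [show Vvf d = expMono d 0 • Wvf by rw [expMono, pow_zero, mul_one]; rfl,
    Derivation.lie_smul_of_lie_eq_zero Xb_lie_Wvf, Xb_expMono_zero, zero_smul]

def adYbOrbit (n : ℕ) : Set VF :=
  Set.range fun k : Fin (n + 1) => (LieAlgebra.ad ℂ VF (Yb 0) ^ (k : ℕ)) (Vvf ((n : ℂ) / 2))

theorem pow_ad_Yb_zero_Vvf_mem_span (n : ℕ) {k : ℕ} (hk : k ≤ n) :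
    (LieAlgebra.ad ℂ VF (Yb 0) ^ k) (Vvf ((n : ℂ) / 2)) ∈ Submodule.span ℂ (adYbOrbit n) :=
  Submodule.subset_span ⟨⟨k, Nat.lt_succ_of_le hk⟩, rfl⟩

theorem Yb_zero_mem_lieStabilizer (n : ℕ) :
    Yb 0 ∈ Submodule.lieStabilizer (R := ℂ) (Submodule.span ℂ (adYbOrbit n)) := by
  refine Submodule.mem_lieStabilizer_span ?_
  rintro _ ⟨⟨k, hk⟩, rfl⟩
  show (LieAlgebra.ad ℂ VF (Yb 0)) ((LieAlgebra.ad ℂ VF (Yb 0) ^ k) (Vvf ((n : ℂ) / 2))) ∈ _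
  rw [← Module.End.mul_apply, ← pow_succ']
  rcases (Nat.lt_succ_iff.1 hk).lt_or_eq with hk | rfl
  · exact pow_ad_Yb_zero_Vvf_mem_span n hk
  · rw [pow_ad_Yb_zero_Vvf_eq_zero]
    exact Submodule.zero_mem _

theorem Xb_mem_lieStabilizer (n : ℕ) :
    Xb ∈ Submodule.lieStabilizer (R := ℂ) (Submodule.span ℂ (adYbOrbit n)) := by
  refine Submodule.mem_lieStabilizer_span ?_
  rintro _ ⟨⟨k, hk⟩, rfl⟩
  dsimp only
  cases k with
  | zero =>
    rw [pow_zero, Module.End.one_apply, Xb_lie_Vvf]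
    exact Submodule.zero_mem _
  | succ k =>
    rw [Xb_lie_pow_ad_Yb_zero_Vvf]
    exact Submodule.smul_mem _ _ (pow_ad_Yb_zero_Vvf_mem_span n (by omega))

theorem typeII_zero_le_lieStabilizer (n : ℕ) :
    typeII 0 ≤ Submodule.lieStabilizer (R := ℂ) (Submodule.span ℂ (adYbOrbit n)) := by
  have hX := Xb_mem_lieStabilizer n
  have hY := Yb_zero_mem_lieStabilizer n
  refine LieSubalgebra.lieSpan_le.2 ?_
  rintro _ (rfl | rfl | rfl)
  exacts [hX, hY, LieSubalgebra.lie_mem _ hX hY]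

theorem adYbOrbit_lie_eq_zero (n : ℕ) : ∀ g ∈ adYbOrbit n, ∀ h ∈ adYbOrbit n, ⁅g, h⁆ = 0 := by
  have weight (c : ℂ) (k : ℕ) : Wvf (c • expMono ((n : ℂ) / 2 - k) k)
      = ((n : ℂ) / 2) • c • expMono ((n : ℂ) / 2 - k) k := by
    rw [Derivation.map_smul, Wvf_expMono, sub_add_cancel, smul_comm]
  rintro _ ⟨j, rfl⟩ _ ⟨k, rfl⟩
  dsimp only
  rw [pow_ad_Yb_zero_Vvf, pow_ad_Yb_zero_Vvf]
  exact Derivation.lie_smul_smul_self_eq_zero (weight _ _) (weight _ _)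

/-- For the type (II)₀ realization, `2d` a nonnegative integer and
`V = exp(dx)(∂ₓ + y∂_y)`, the invariant subspace generated by `V` is the span of
`(ad Y)ⁿ(V)` for `0 ≤ n ≤ 2d`, and it is an abelian Lie subalgebra of `V(ℂ²)`. -/
theorem statement_14 (n : ℕ) :
    invSpan (typeII 0) (Vvf ((n : ℂ) / 2))
        = Submodule.span ℂ (Set.range fun k : Fin (n + 1) =>
            ((LieAlgebra.ad ℂ VF (Yb 0)) ^ (k : ℕ)) (Vvf ((n : ℂ) / 2))) ∧
    ∀ a ∈ invSpan (typeII 0) (Vvf ((n : ℂ) / 2)),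
      ∀ b ∈ invSpan (typeII 0) (Vvf ((n : ℂ) / 2)), ⁅a, b⁆ = 0 := by
  have hspan : invSpan (typeII 0) (Vvf ((n : ℂ) / 2)) = Submodule.span ℂ (adYbOrbit n) :=
    le_antisymm
      (invSpan_le (pow_ad_Yb_zero_Vvf_mem_span n n.zero_le) (typeII_zero_le_lieStabilizer n))
      (Submodule.span_le.2 <| Set.range_subset_iff.2 fun _ =>
        pow_ad_apply_mem_invSpan (LieSubalgebra.subset_lieSpan (by simp)) _ _)
  refine ⟨hspan, fun a ha b hb => ?_⟩
  rw [hspan] at ha hb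
  exact lie_eq_zero_of_mem_span (R := ℂ) (adYbOrbit_lie_eq_zero n) ha hb
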